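/- Suppose P(X_m = 0 for some m) < 1. Then t_n → 0 as n → ∞, and for any non-decreasing sequence of stopping times (T_m)_{m≥1} with E[T_m] < ∞ for every m and T_m → T_∂ almost surely, E[X_{T_m}] → +∞ as m → ∞. -/

import Mathlib

open MeasureTheory Filter Topology Finset
open scoped ENNReal NNReal Classical

/-- Partial products `t_n = (l_1 ⋯ l_n)/(r_1 ⋯ r_n)`, with `t_0 = 1`. -/
noncomputable def tp (l r : ℕ → ℝ) (n : ℕ) : ℝ :=
  (∏ i ∈ Finset.Icc 1 n, l i) / (∏ i ∈ Finset.Icc 1 n, r i)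

/-- `x_n = Σ_{i=0}^{n-1} t_i`. -/
noncomputable def xp (l r : ℕ → ℝ) (n : ℕ) : ℝ :=
  ∑ i ∈ Finset.range n, tp l r i

/-- The natural filtration of the process `X` (σ-algebra generated by `X_0, …, X_m`). -/
def natFilt {Ω : Type*} (X : ℕ → Ω → ℕ) (m : ℕ) : MeasurableSpace Ω :=
  ⨆ i ∈ Finset.range (m + 1), MeasurableSpace.comap (X i) ⊤

/-- A birth–death chain on ℕ started at `k`, with up–probabilities `r n` and
down–probabilities `l n` for states `n ≥ 1`, and `0` absorbing.  The Markov
property is encoded by conditioning on arbitrary events of the natural filtration. -/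
structure IsBDChain {Ω : Type*} [MeasurableSpace Ω] (P : Measure Ω)
    (X : ℕ → Ω → ℕ) (k : ℕ) (l r : ℕ → ℝ) : Prop where
  isProb : IsProbabilityMeasure P
  one_le_k : 1 ≤ k
  l_pos : ∀ n, 1 ≤ n → 0 < l n
  r_pos : ∀ n, 1 ≤ n → 0 < r n
  lr_one : ∀ n, 1 ≤ n → l n + r n = 1
  meas : ∀ m, Measurable (X m)
  init : ∀ᵐ ω ∂P, X 0 ω = k
  absorb : ∀ᵐ ω ∂P, ∀ m, X m ω = 0 → X (m + 1) ω = 0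
  step_up : ∀ m n, 1 ≤ n → ∀ A : Set Ω, MeasurableSet[natFilt X m] A →
    P (A ∩ {ω | X m ω = n ∧ X (m + 1) ω = n + 1}) =
      ENNReal.ofReal (r n) * P (A ∩ {ω | X m ω = n})
  step_down : ∀ m n, 1 ≤ n → ∀ A : Set Ω, MeasurableSet[natFilt X m] A →
    P (A ∩ {ω | X m ω = n ∧ X (m + 1) ω = n - 1}) =
      ENNReal.ofReal (l n) * P (A ∩ {ω | X m ω = n})

/-- A (finite-valued) stopping time for the natural filtration of `X`. -/
def IsBDStop {Ω : Type*} (X : ℕ → Ω → ℕ) (T : Ω → ℕ) : Prop :=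
  ∀ m, MeasurableSet[natFilt X m] {ω | T ω = m}

/-- An extended-ℕ-valued stopping time for the natural filtration of `X`. -/
def IsBDStopE {Ω : Type*} (X : ℕ → Ω → ℕ) (T : Ω → ℕ∞) : Prop :=
  ∀ m : ℕ, MeasurableSet[natFilt X m] {ω | T ω = (m : ℕ∞)}

/-- First hitting time of the set `S ⊆ ℕ` by the path `m ↦ X m ω`, valued in `ℕ∞`. -/
noncomputable def hitTime {Ω : Type*} (X : ℕ → Ω → ℕ) (S : Set ℕ) (ω : Ω) : ℕ∞ :=
  sInf ((fun m : ℕ => (m : ℕ∞)) '' {m | X m ω ∈ S})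

/-- `T_∂`: the first hitting time of `0`, with value `∞` if `0` is never hit. -/
noncomputable def hit0 {Ω : Type*} (X : ℕ → Ω → ℕ) (ω : Ω) : ℕ∞ :=
  hitTime X {0} ω

/-- `G_T^n`: the number of times `m` with `0 ≤ m ≤ T-1` and `X_m = n` (finite `T`). -/
def count {Ω : Type*} (X : ℕ → Ω → ℕ) (n : ℕ) (T : Ω → ℕ) (ω : Ω) : ℕ :=
  ((Finset.range (T ω)).filter fun m => X m ω = n).card

/-- `G_τ^n` for an `ℕ∞`-valued time `τ`, valued in `ℝ≥0∞`. -/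
noncomputable def countE {Ω : Type*} (X : ℕ → Ω → ℕ) (n : ℕ) (τ : Ω → ℕ∞) (ω : Ω) : ℝ≥0∞ :=
  ∑' m : ℕ, if (m : ℕ∞) < τ ω ∧ X m ω = n then 1 else 0

/-!
The function `x_n = ∑_{i<n} t_i` is harmonic for the chain off `0`
(`r_n x_{n+1} + l_n x_{n-1} = x_n`), so `x` evaluated along the chain stopped on entering
`{0} ∪ [N, ∞)` has constant expectation `x_k`. By Lévy's conditional Borel–Cantelli lemma,
infinitely many visits to a state `n + 1` force infinitely many visits to `n`; inductively, a
path that never hits `0` visits every state finitely often, i.e. tends to infinity. Such a path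
is therefore stopped at a state `≥ N`, whence `x_N · P(T_∂ = ∞) ≤ x_k`: the series `∑ t_n`
converges and `t_n → 0`. On the same event, `T_m → ∞` forces `X_{T_m} → ∞`, and Fatou's lemma
gives `E[X_{T_m}] → ∞`.
-/

section Harmonic

variable {l r : ℕ → ℝ}

lemma tp_pos (hl : ∀ n, 1 ≤ n → 0 < l n) (hr : ∀ n, 1 ≤ n → 0 < r n) (n : ℕ) :
    0 < tp l r n :=
  div_pos (prod_pos fun i hi => hl i (mem_Icc.1 hi).1)
    (prod_pos fun i hi => hr i (mem_Icc.1 hi).1)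

lemma tp_succ (n : ℕ) : tp l r (n + 1) = tp l r n * (l (n + 1) / r (n + 1)) := by
  simp only [tp, prod_Icc_succ_top (Nat.le_add_left 1 n), mul_div_mul_comm]

lemma xp_succ (n : ℕ) : xp l r (n + 1) = xp l r n + tp l r n :=
  sum_range_succ _ n

lemma xp_nonneg (hl : ∀ n, 1 ≤ n → 0 < l n) (hr : ∀ n, 1 ≤ n → 0 < r n) (n : ℕ) :
    0 ≤ xp l r n :=
  sum_nonneg fun i _ => (tp_pos hl hr i).le

lemma xp_mono (hl : ∀ n, 1 ≤ n → 0 < l n) (hr : ∀ n, 1 ≤ n → 0 < r n) : Monotone (xp l r) :=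
  monotone_nat_of_le_succ fun n => by
    rw [xp_succ]
    linarith [tp_pos hl hr n]

lemma xp_harmonic (hr : ∀ n, 1 ≤ n → 0 < r n) (hlr : ∀ n, 1 ≤ n → l n + r n = 1) (n : ℕ) :
    r (n + 1) * xp l r (n + 2) + l (n + 1) * xp l r n = xp l r (n + 1) := by
  have hr' : r (n + 1) ≠ 0 := (hr (n + 1) (Nat.le_add_left 1 n)).ne'
  rw [xp_succ (n + 1), tp_succ, xp_succ n, mul_div_assoc']
  field_simp
  linear_combination (xp l r n + tp l r n) * hlr (n + 1) (Nat.le_add_left 1 n)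

end Harmonic

section NaturalFiltration

variable {Ω : Type*} {X : ℕ → Ω → ℕ}

lemma natFilt_mono : Monotone (natFilt X) := fun m m' h =>
  iSup₂_le fun i hi => le_iSup₂_of_le (f := fun i (_ : i ∈ range (m' + 1)) =>
    MeasurableSpace.comap (X i) ⊤) i (by simp only [mem_range] at hi ⊢; omega) le_rfl

lemma natFilt_le [MeasurableSpace Ω] (hX : ∀ m, Measurable (X m)) (m : ℕ) :
    natFilt X m ≤ ‹MeasurableSpace Ω› :=
  iSup₂_le fun i _ => (hX i).comap_le

lemma measurable_natFilt {i m : ℕ} (h : i ≤ m) : Measurable[natFilt X m] (X i) :=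
  (comap_measurable (X i)).mono (le_iSup₂_of_le (f := fun i (_ : i ∈ range (m + 1)) =>
    MeasurableSpace.comap (X i) ⊤) i (mem_range.2 (by omega)) le_rfl) le_rfl

def natFiltration [MeasurableSpace Ω] (hX : ∀ m, Measurable (X m)) :
    Filtration ℕ ‹MeasurableSpace Ω› :=
  ⟨natFilt X, natFilt_mono, natFilt_le hX⟩

lemma measurable_comp_of_isBDStop [MeasurableSpace Ω] (hX : ∀ m, Measurable (X m)) {T : Ω → ℕ}
    (hT : IsBDStop X T) : Measurable fun ω => X (T ω) ω := by
  have hTm : Measurable T :=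
    measurable_to_countable' fun m => natFilt_le hX m _ (hT m)
  exact (measurable_from_prod_countable_right (f := fun p : ℕ × Ω => X p.1 p.2) hX).comp
    (hTm.prodMk measurable_id)

end NaturalFiltration

lemma setLIntegral_comp_eq_tsum {Ω : Type*} [MeasurableSpace Ω] (μ : Measure Ω) {Y : Ω → ℕ}
    (hY : Measurable Y) (g : ℕ → ℝ≥0∞) (S : Set Ω) :
    ∫⁻ ω in S, g (Y ω) ∂μ = ∑' n, g n * μ (S ∩ {ω | Y ω = n}) := by
  rw [← lintegral_map measurable_from_top hY, lintegral_countable']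
  congr 1 with n
  rw [Measure.map_apply hY (measurableSet_singleton n),
    Measure.restrict_apply (hY (measurableSet_singleton n)), Set.inter_comm]
  rfl

/-- `X_{j ∧ τ_S}`, where `τ_S` is the first entrance time of `S`. -/
noncomputable def stoppedChain {Ω : Type*} (X : ℕ → Ω → ℕ) (S : Set ℕ) : ℕ → Ω → ℕ
  | 0 => X 0
  | j + 1 => fun ω => if stoppedChain X S j ω ∈ S then stoppedChain X S j ω else X (j + 1) ω

section StoppedChain

variable {Ω : Type*} {X : ℕ → Ω → ℕ} {S : Set ℕ} {j : ℕ} {ω : Ω}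

lemma stoppedChain_succ_of_mem (h : stoppedChain X S j ω ∈ S) :
    stoppedChain X S (j + 1) ω = stoppedChain X S j ω :=
  if_pos h

lemma stoppedChain_eq_of_notMem (h : stoppedChain X S j ω ∉ S) :
    stoppedChain X S j ω = X j ω := by
  cases j with
  | zero => rfl
  | succ j =>
    by_cases hj : stoppedChain X S j ω ∈ S
    · rw [stoppedChain_succ_of_mem hj] at h
      exact absurd hj h
    · exact if_neg hj

lemma stoppedChain_mem_of_mem (h : X j ω ∈ S) : stoppedChain X S j ω ∈ S := by
  by_contra h'
  exact h' (stoppedChain_eq_of_notMem h' ▸ h)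

lemma exists_stoppedChain_eq (j : ℕ) : ∃ i ≤ j, stoppedChain X S j ω = X i ω := by
  induction j with
  | zero => exact ⟨0, le_rfl, rfl⟩
  | succ j ih =>
    by_cases h : stoppedChain X S j ω ∈ S
    · obtain ⟨i, hi, heq⟩ := ih
      exact ⟨i, by omega, by rw [stoppedChain_succ_of_mem h, heq]⟩
    · exact ⟨j + 1, le_rfl, if_neg h⟩

lemma measurable_stoppedChain (j : ℕ) : Measurable[natFilt X j] (stoppedChain X S j) := by
  induction j with
  | zero => exact measurable_natFilt (X := X) (i := 0) le_rfl
  | succ j ih =>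
    have ih' : Measurable[natFilt X (j + 1)] (stoppedChain X S j) :=
      ih.mono (natFilt_mono j.le_succ) le_rfl
    have hS : MeasurableSet[natFilt X (j + 1)] {ω | stoppedChain X S j ω ∈ S} :=
      ih' (MeasurableSet.of_discrete (s := S))
    exact Measurable.ite hS ih' (measurable_natFilt (X := X) (i := j + 1) le_rfl)

end StoppedChain

lemma tendsto_lintegral_nhds_top {α : Type*} [MeasurableSpace α] {μ : Measure α}
    {f : ℕ → α → ℝ≥0∞} (hf : ∀ n, Measurable (f n)) {s : Set α} (hs : MeasurableSet s)
    (hμs : μ s ≠ 0) (h : ∀ᵐ x ∂μ, x ∈ s → Tendsto (fun n => f n x) atTop (𝓝 ⊤)) :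
    Tendsto (fun n => ∫⁻ x, f n x ∂μ) atTop (𝓝 ⊤) := by
  have hliminf : ⊤ ≤ ∫⁻ x, liminf (fun n => f n x) atTop ∂μ :=
    calc ⊤ = ∫⁻ _ in s, ⊤ ∂μ := by rw [setLIntegral_const, ENNReal.top_mul hμs]
      _ = ∫⁻ x in s, liminf (fun n => f n x) atTop ∂μ :=
          setLIntegral_congr_fun_ae hs (h.mono fun x hx hxs => (hx hxs).liminf_eq.symm)
      _ ≤ ∫⁻ x, liminf (fun n => f n x) atTop ∂μ := setLIntegral_le_lintegral _ _
  exact tendsto_of_le_liminf_of_limsup_le (hliminf.trans (lintegral_liminf_le hf)) le_top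

lemma hit0_eq_top {Ω : Type*} {X : ℕ → Ω → ℕ} {ω : Ω} (h : ∀ m, X m ω ≠ 0) : hit0 X ω = ⊤ := by
  simp [hit0, hitTime, h]

namespace IsBDChain

variable {Ω : Type*} [MeasurableSpace Ω] {P : Measure Ω} {X : ℕ → Ω → ℕ} {k : ℕ}
  {l r : ℕ → ℝ} (hC : IsBDChain P X k l r)
include hC

lemma measurableSet_of_natFilt {m : ℕ} {A : Set Ω} (hA : MeasurableSet[natFilt X m] A) :
    MeasurableSet A :=
  natFilt_le hC.meas m A hA

lemma measure_step_eq_zero {m n j : ℕ} (hn : 1 ≤ n) (hj : j ≠ n + 1) (hj' : j ≠ n - 1)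
    {A : Set Ω} (hA : MeasurableSet[natFilt X m] A) :
    P (A ∩ {ω | X m ω = n ∧ X (m + 1) ω = j}) = 0 := by
  have := hC.isProb
  set B := A ∩ {ω | X m ω = n}
  have hB : MeasurableSet B := (hC.measurableSet_of_natFilt hA).inter
    (hC.meas m (measurableSet_singleton n))
  have hstep (i : ℕ) : A ∩ {ω | X m ω = n ∧ X (m + 1) ω = i} = B ∩ {ω | X (m + 1) ω = i} := by
    simp only [B, Set.inter_assoc, Set.ofPred_and]
  have hmeas (i : ℕ) : MeasurableSet (B ∩ {ω | X (m + 1) ω = i}) :=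
    hB.inter (hC.meas (m + 1) (measurableSet_singleton i))
  have hdisj {i i' : ℕ} (h : i ≠ i') :
      Disjoint (B ∩ {ω | X (m + 1) ω = i}) (B ∩ {ω | X (m + 1) ω = i'}) :=
    Set.disjoint_left.2 fun ω h1 h2 => h (h1.2.symm.trans h2.2)
  have hup_down : P (B ∩ {ω | X (m + 1) ω = n + 1}) + P (B ∩ {ω | X (m + 1) ω = n - 1}) = P B := by
    rw [← hstep, ← hstep, hC.step_up m n hn A hA, hC.step_down m n hn A hA, ← add_mul,
      ← ENNReal.ofReal_add (hC.r_pos n hn).le (hC.l_pos n hn).le, add_comm, hC.lr_one n hn,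
      ENNReal.ofReal_one, one_mul]
  have hle : P B + P (B ∩ {ω | X (m + 1) ω = j}) ≤ P B + 0 := by
    rw [add_zero]
    calc P B + P (B ∩ {ω | X (m + 1) ω = j})
        = P (B ∩ {ω | X (m + 1) ω = n + 1} ∪ B ∩ {ω | X (m + 1) ω = n - 1} ∪
            B ∩ {ω | X (m + 1) ω = j}) := by
          rw [measure_union (Set.disjoint_union_left.2 ⟨hdisj hj.symm, hdisj hj'.symm⟩)
            (hmeas _), measure_union (hdisj (by omega)) (hmeas _), hup_down]
      _ ≤ P B := measure_mono (Set.union_subset (Set.union_subset Set.inter_subset_left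
            Set.inter_subset_left) Set.inter_subset_left)
  rw [hstep]
  exact le_antisymm ((ENNReal.add_le_add_iff_left (measure_ne_top P B)).1 hle) zero_le

lemma setLIntegral_comp_step {m : ℕ} {A : Set Ω} (hA : MeasurableSet[natFilt X m] A) (n : ℕ)
    (g : ℕ → ℝ≥0∞) :
    ∫⁻ ω in A ∩ {ω | X m ω = n + 1}, g (X (m + 1) ω) ∂P =
      (g (n + 2) * ENNReal.ofReal (r (n + 1)) + g n * ENNReal.ofReal (l (n + 1))) *
        P (A ∩ {ω | X m ω = n + 1}) := by
  have hn : 1 ≤ n + 1 := Nat.le_add_left 1 n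
  have hstep (i : ℕ) : A ∩ {ω | X m ω = n + 1} ∩ {ω | X (m + 1) ω = i} =
      A ∩ {ω | X m ω = n + 1 ∧ X (m + 1) ω = i} := by
    simp only [Set.inter_assoc, Set.ofPred_and]
  rw [setLIntegral_comp_eq_tsum P (hC.meas (m + 1)), tsum_eq_sum (s := {n + 2, n}) fun j hj => by
      simp only [Finset.mem_insert, Finset.mem_singleton, not_or] at hj
      rw [hstep, hC.measure_step_eq_zero hn hj.1 hj.2 hA, mul_zero],
    sum_pair (by omega), hstep, hstep]
  have hup := hC.step_up m (n + 1) hn A hA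
  have hdown := hC.step_down m (n + 1) hn A hA
  simp only [Nat.add_sub_cancel] at hdown
  rw [hup, hdown]
  ring

lemma setLIntegral_xp_succ {m : ℕ} {A : Set Ω} (hA : MeasurableSet[natFilt X m] A)
    (hA1 : ∀ ω ∈ A, X m ω ≠ 0) :
    ∫⁻ ω in A, ENNReal.ofReal (xp l r (X (m + 1) ω)) ∂P =
      ∫⁻ ω in A, ENNReal.ofReal (xp l r (X m ω)) ∂P := by
  have hAm := hC.measurableSet_of_natFilt hA
  have hpart : A = ⋃ n, A ∩ {ω | X m ω = n} := by ext ω; simp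
  have hmeas (n : ℕ) : MeasurableSet (A ∩ {ω | X m ω = n}) :=
    hAm.inter (hC.meas m (measurableSet_singleton n))
  have hdisj : Pairwise (Function.onFun Disjoint fun n => A ∩ {ω | X m ω = n}) := fun a b hab =>
    Set.disjoint_left.2 fun ω h1 h2 => hab (h1.2.symm.trans h2.2)
  rw [hpart, lintegral_iUnion hmeas hdisj, lintegral_iUnion hmeas hdisj]
  congr 1 with n
  have hconst : ∫⁻ ω in A ∩ {ω | X m ω = n}, ENNReal.ofReal (xp l r (X m ω)) ∂P =
      ENNReal.ofReal (xp l r n) * P (A ∩ {ω | X m ω = n}) := by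
    rw [← setLIntegral_const]
    exact setLIntegral_congr_fun (hmeas n) fun ω hω => by rw [hω.2]
  rw [hconst]
  rcases n with _ | n
  · have : A ∩ {ω | X m ω = 0} = ∅ :=
      Set.eq_empty_of_forall_notMem fun ω hω => hA1 ω hω.1 hω.2
    simp [this]
  · have hxnn := xp_nonneg hC.l_pos hC.r_pos (l := l) (r := r)
    have hr := (hC.r_pos (n + 1) (Nat.le_add_left 1 n)).le
    have hl := (hC.l_pos (n + 1) (Nat.le_add_left 1 n)).le
    rw [hC.setLIntegral_comp_step hA n fun i => ENNReal.ofReal (xp l r i),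
      ← ENNReal.ofReal_mul (hxnn _), ← ENNReal.ofReal_mul (hxnn _),
      ← ENNReal.ofReal_add (mul_nonneg (hxnn _) hr) (mul_nonneg (hxnn _) hl),
      mul_comm (xp l r (n + 2)), mul_comm (xp l r n), xp_harmonic hC.r_pos hC.lr_one n]

lemma condExp_indicator_stepDown (t n : ℕ) :
    P[{ω | X t ω = n + 1 ∧ X (t + 1) ω = n}.indicator (1 : Ω → ℝ) | natFiltration hC.meas t] =ᵐ[P]
      {ω | X t ω = n + 1}.indicator fun _ => l (n + 1) := by
  have := hC.isProb
  have hF : MeasurableSet[natFilt X t] {ω | X t ω = n + 1} :=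
    measurable_natFilt le_rfl (measurableSet_singleton _)
  have hS : MeasurableSet {ω | X t ω = n + 1 ∧ X (t + 1) ω = n} :=
    (hC.meas t (measurableSet_singleton _)).inter (hC.meas (t + 1) (measurableSet_singleton _))
  refine (ae_eq_condExp_of_forall_setIntegral_eq (natFilt_le hC.meas t)
    ((integrable_const 1).indicator hS)
    (fun _ _ _ => ((integrable_const _).indicator (hC.measurableSet_of_natFilt hF)).integrableOn)
    (fun A hA _ => ?_) (stronglyMeasurable_const.indicator hF).aestronglyMeasurable).symm
  have hdown := hC.step_down t (n + 1) (Nat.le_add_left 1 n) A hA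
  simp only [Nat.add_sub_cancel] at hdown
  rw [setIntegral_indicator (hC.measurableSet_of_natFilt hF), setIntegral_indicator hS]
  simp only [Pi.one_apply, setIntegral_const, smul_eq_mul, mul_one, measureReal_def, hdown,
    ENNReal.toReal_mul, ENNReal.toReal_ofReal (hC.l_pos _ (Nat.le_add_left 1 n)).le]
  ring

/-- Lévy's conditional Borel–Cantelli lemma: from `n + 1` the chain steps down with
conditional probability `l (n + 1) > 0`, so infinitely many visits to `n + 1` force
infinitely many steps down to `n`. -/
lemma ae_frequently_of_frequently_succ (n : ℕ) :
    ∀ᵐ ω ∂P, (∃ᶠ t in atTop, X t ω = n + 1) → ∃ᶠ t in atTop, X t ω = n := by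
  have := hC.isProb
  set s : ℕ → Set Ω := fun t => {ω | X (t - 1) ω = n + 1 ∧ X t ω = n}
  have hs (t : ℕ) : MeasurableSet[natFiltration hC.meas t] (s t) :=
    (measurable_natFilt (Nat.sub_le t 1) (measurableSet_singleton _)).inter
      (measurable_natFilt le_rfl (measurableSet_singleton _))
  filter_upwards [ae_mem_limsup_atTop_iff P hs,
    ae_all_iff.2 fun t => hC.condExp_indicator_stepDown t n] with ω hlimsup hcond hfreq
  have hcond' (t : ℕ) : P[(s (t + 1)).indicator (1 : Ω → ℝ) | natFiltration hC.meas t] ω =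
      {ω | X t ω = n + 1}.indicator (fun _ => l (n + 1)) ω := hcond t
  have hsum : Tendsto (fun m => ∑ t ∈ range m,
      {ω | X t ω = n + 1}.indicator (fun _ => l (n + 1)) ω) atTop atTop := by
    have := Set.limsup_eq_tendsto_sum_indicator_atTop (hC.l_pos _ (Nat.le_add_left 1 n))
      fun t => {ω | X t ω = n + 1}
    exact (Set.ext_iff.1 this ω).1 (mem_limsup_iff_frequently_mem.2 hfreq)
  have hmem : ω ∈ limsup s atTop := hlimsup.2 (by simpa only [hcond'] using hsum)
  exact (mem_limsup_iff_frequently_mem.1 hmem).mono fun t ht => ht.2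

lemma ae_eventually_ne (n : ℕ) :
    ∀ᵐ ω ∂P, (∀ m, X m ω ≠ 0) → ∀ᶠ t in atTop, X t ω ≠ n := by
  induction n with
  | zero => exact Eventually.of_forall fun ω h0 => Eventually.of_forall h0
  | succ n ih =>
    filter_upwards [ih, hC.ae_frequently_of_frequently_succ n] with ω hne hfreq h0
    exact not_frequently.1 fun h => hfreq h (hne h0)

theorem ae_tendsto_atTop_of_forall_ne_zero :
    ∀ᵐ ω ∂P, (∀ m, X m ω ≠ 0) → Tendsto (fun t => X t ω) atTop atTop := by
  filter_upwards [ae_all_iff.2 hC.ae_eventually_ne] with ω hne h0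
  refine tendsto_atTop.2 fun b =>
    ((eventually_all_finset (range b)).2 fun n _ => hne n h0).mono fun t ht => ?_
  by_contra! h
  exact ht (X t ω) (mem_range.2 h) rfl

lemma measurableSet_forall_ne_zero : MeasurableSet {ω | ∀ m, X m ω ≠ 0} := by
  simp only [Set.ofPred_forall]
  exact .iInter fun m => (hC.meas m (measurableSet_singleton 0)).compl

lemma prob_forall_ne_zero_pos (hlt : P {ω | ∃ m, X m ω = 0} < 1) :
    0 < P {ω | ∀ m, X m ω ≠ 0} := by
  have := hC.isProb
  have hcompl : {ω | ∀ m, X m ω ≠ 0} = {ω | ∃ m, X m ω = 0}ᶜ := by ext; simp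
  rw [hcompl, prob_compl_eq_one_sub (by simpa [hcompl] using hC.measurableSet_forall_ne_zero.compl)]
  exact tsub_pos_of_lt hlt

lemma lintegral_xp_stoppedChain {S : Set ℕ} (h0 : 0 ∈ S) (j : ℕ) :
    ∫⁻ ω, ENNReal.ofReal (xp l r (stoppedChain X S j ω)) ∂P = ENNReal.ofReal (xp l r k) := by
  have := hC.isProb
  induction j with
  | zero =>
    have hinit : (fun ω => ENNReal.ofReal (xp l r (stoppedChain X S 0 ω))) =ᵐ[P]
        fun _ => ENNReal.ofReal (xp l r k) :=
      hC.init.mono fun ω hω => by simp only [stoppedChain, hω]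
    rw [lintegral_congr_ae hinit, lintegral_const, measure_univ, mul_one]
  | succ j ih =>
    set A := {ω | stoppedChain X S j ω ∈ S}
    have hA : MeasurableSet[natFilt X j] A := measurable_stoppedChain j .of_discrete
    have hAm := hC.measurableSet_of_natFilt hA
    rw [← ih, ← lintegral_add_compl _ hAm,
      ← lintegral_add_compl (fun ω => ENNReal.ofReal (xp l r (stoppedChain X S j ω))) hAm]
    congr 1
    · exact setLIntegral_congr_fun hAm fun ω hω => by rw [stoppedChain_succ_of_mem hω]
    · calc ∫⁻ ω in Aᶜ, ENNReal.ofReal (xp l r (stoppedChain X S (j + 1) ω)) ∂P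
          = ∫⁻ ω in Aᶜ, ENNReal.ofReal (xp l r (X (j + 1) ω)) ∂P :=
            setLIntegral_congr_fun hAm.compl fun ω hω => by
              rw [show stoppedChain X S (j + 1) ω = X (j + 1) ω from if_neg hω]
        _ = ∫⁻ ω in Aᶜ, ENNReal.ofReal (xp l r (X j ω)) ∂P :=
            hC.setLIntegral_xp_succ hA.compl fun ω hω hX => hω <| by
              rwa [Set.mem_ofPred_eq, stoppedChain_eq_of_notMem hω, hX]
        _ = ∫⁻ ω in Aᶜ, ENNReal.ofReal (xp l r (stoppedChain X S j ω)) ∂P :=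
            setLIntegral_congr_fun hAm.compl fun ω hω => by rw [stoppedChain_eq_of_notMem hω]

lemma xp_mul_measure_le_of_stoppedChain {S : Set ℕ} (h0 : 0 ∈ S) (N j : ℕ) :
    ENNReal.ofReal (xp l r N) * P {ω | N ≤ stoppedChain X S j ω} ≤ ENNReal.ofReal (xp l r k) :=
  calc ENNReal.ofReal (xp l r N) * P {ω | N ≤ stoppedChain X S j ω}
      ≤ ENNReal.ofReal (xp l r N) *
          P {ω | ENNReal.ofReal (xp l r N) ≤ ENNReal.ofReal (xp l r (stoppedChain X S j ω))} :=
        mul_le_mul_right (measure_mono fun _ h =>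
          ENNReal.ofReal_le_ofReal (xp_mono hC.l_pos hC.r_pos h)) _
    _ ≤ ∫⁻ ω, ENNReal.ofReal (xp l r (stoppedChain X S j ω)) ∂P :=
        mul_meas_ge_le_lintegral₀
          ((measurable_from_nat (f := fun n => ENNReal.ofReal (xp l r n))).comp
          ((measurable_stoppedChain (S := S) j).mono (natFilt_le hC.meas j) le_rfl)).aemeasurable _
    _ = ENNReal.ofReal (xp l r k) := hC.lintegral_xp_stoppedChain h0 j

lemma xp_mul_measure_forall_ne_zero_le (N : ℕ) :
    ENNReal.ofReal (xp l r N) * P {ω | ∀ m, X m ω ≠ 0} ≤ ENNReal.ofReal (xp l r k) := by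
  set S : Set ℕ := {n | n = 0 ∨ N ≤ n}
  set D : ℕ → Set Ω := fun j => {ω | N ≤ stoppedChain X S j ω}
  have hD : Monotone D := monotone_nat_of_le_succ fun j ω (h : N ≤ stoppedChain X S j ω) =>
    show N ≤ stoppedChain X S (j + 1) ω by rwa [stoppedChain_succ_of_mem (Or.inr h)]
  have hcover : {ω | ∀ m, X m ω ≠ 0} ≤ᵐ[P] ⋃ j, D j := by
    filter_upwards [hC.ae_tendsto_atTop_of_forall_ne_zero] with ω hesc h0
    obtain ⟨j, hj⟩ := ((hesc h0).eventually_ge_atTop N).exists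
    obtain ⟨i, -, hi⟩ := exists_stoppedChain_eq (S := S) (ω := ω) j
    refine Set.mem_iUnion.2 ⟨j, ?_⟩
    rcases stoppedChain_mem_of_mem (S := S) (Or.inr hj) with h | h
    · exact absurd (hi.symm.trans h) (h0 i)
    · exact h
  calc ENNReal.ofReal (xp l r N) * P {ω | ∀ m, X m ω ≠ 0}
      ≤ ENNReal.ofReal (xp l r N) * P (⋃ j, D j) := mul_le_mul_right (measure_mono_ae hcover) _
    _ = ⨆ j, ENNReal.ofReal (xp l r N) * P (D j) := by rw [hD.measure_iUnion, ENNReal.mul_iSup]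
    _ ≤ ENNReal.ofReal (xp l r k) :=
        iSup_le fun j => hC.xp_mul_measure_le_of_stoppedChain (Or.inl rfl) N j

theorem summable_tp (hpos : 0 < P {ω | ∀ m, X m ω ≠ 0}) : Summable (tp l r) := by
  have := hC.isProb
  set c := P {ω | ∀ m, X m ω ≠ 0}
  have hc : 0 < c.toReal := ENNReal.toReal_pos hpos.ne' (measure_ne_top P _)
  refine summable_of_sum_range_le (c := xp l r k / c.toReal)
    (fun n => (tp_pos hC.l_pos hC.r_pos n).le) fun N => ?_
  have h := ENNReal.toReal_mono ENNReal.ofReal_ne_top (hC.xp_mul_measure_forall_ne_zero_le N)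
  rw [ENNReal.toReal_mul, ENNReal.toReal_ofReal (xp_nonneg hC.l_pos hC.r_pos N),
    ENNReal.toReal_ofReal (xp_nonneg hC.l_pos hC.r_pos k)] at h
  exact (le_div_iff₀ hc).2 h

end IsBDChain

/-- If `P(X_m = 0 for some m) < 1`, then `t_n → 0`, and for any
non-decreasing sequence of stopping times `T_m` with `E[T_m] < ∞` and `T_m → T_∂`
a.s., `E[X_{T_m}] → +∞`. -/
theorem stmt8 {Ω : Type*} [MeasurableSpace Ω] (P : Measure Ω) (X : ℕ → Ω → ℕ)
    (k : ℕ) (l r : ℕ → ℝ) (hC : IsBDChain P X k l r)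
    (hlt : P {ω | ∃ m : ℕ, X m ω = 0} < 1) :
    Tendsto (tp l r) atTop (nhds 0) ∧
    ∀ T : ℕ → Ω → ℕ, (∀ m, IsBDStop X (T m)) →
      (∀ ω, Monotone fun m => T m ω) →
      (∀ m, ∫⁻ ω, (T m ω : ℝ≥0∞) ∂P < ⊤) →
      (∀ᵐ ω ∂P, Tendsto (fun m => (T m ω : ℕ∞)) atTop (nhds (hit0 X ω))) →
      Tendsto (fun m => ∫⁻ ω, (X (T m ω) ω : ℝ≥0∞) ∂P) atTop (nhds ⊤) := by
  have hpos := hC.prob_forall_ne_zero_pos hlt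
  refine ⟨(hC.summable_tp hpos).tendsto_atTop_zero, fun T hT _ _ hlim => ?_⟩
  refine tendsto_lintegral_nhds_top
    (fun m => measurable_from_nat.comp (measurable_comp_of_isBDStop hC.meas (hT m)))
    hC.measurableSet_forall_ne_zero hpos.ne' ?_
  filter_upwards [hC.ae_tendsto_atTop_of_forall_ne_zero, hlim] with ω hX hTω h0
  rw [hit0_eq_top h0, ENat.tendsto_nhds_top_iff_natCast_lt] at hTω
  have hT : Tendsto (fun m => T m ω) atTop atTop :=
    tendsto_atTop.2 fun b => (hTω b).mono fun _ h => by exact_mod_cast h.le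
  exact ENNReal.tendsto_nat_nhds_top.comp ((hX h0).comp hT)
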